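/- Confusion Entropy violates the minimal agreement and monotonicity properties: for the binary confusion matrices C1 = ((0,6),(6,0)) and C2 = ((1,5),(5,1)) (both with n = 12), CE(C1) = 1 < CE(C2), even though C2 is obtained from C1 by moving mass to the diagonal (i.e., C2 has strictly more correct classifications), and C1 is zero-diagonal while C2 is not. -/
import Mathlib


/-- One term of the Confusion Entropy, with the convention 0·log 0 = 0. -/
noncomputable def ceTerm (c d : ℝ) : ℝ :=
  if c = 0 then 0 else c * Real.logb 2 (c / d)

/-- Binary Confusion Entropy (m = 2, so the logarithm base is 2m − 2 = 2). -/
noncomputable def CEbin (c11 c10 c01 c00 : ℝ) : ℝ :=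
  -(1 / (2 * (c11 + c10 + c01 + c00))) *
    (ceTerm c10 ((c01 + c00) + (c10 + c00)) + ceTerm c01 ((c01 + c00) + (c10 + c00)) +
     ceTerm c01 ((c11 + c10) + (c11 + c01)) + ceTerm c10 ((c11 + c10) + (c11 + c01)))

lemma logb_half : Real.logb 2 ((6:ℝ)/12) = -1 := by
  rw [show (6:ℝ)/12 = ((2:ℝ))⁻¹ by norm_num, Real.logb_inv,
    Real.logb_self_eq_one (by norm_num)]

lemma logb_key : Real.logb 2 ((5:ℝ)/12) < -(6/5) := by
  have h64 : Real.logb 2 ((1:ℝ)/64) = -6 := by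
    rw [show (1:ℝ)/64 = ((2:ℝ)^(6:ℕ))⁻¹ by norm_num, Real.logb_inv, Real.logb_pow,
      Real.logb_self_eq_one (by norm_num)]
    norm_num
  have h5 : Real.logb 2 (((5:ℝ)/12) ^ (5:ℕ)) < Real.logb 2 ((1:ℝ)/64) := by
    apply Real.logb_lt_logb (by norm_num) (by positivity)
    norm_num
  rw [Real.logb_pow, h64] at h5
  push_cast at h5
  linarith

/-- Confusion Entropy violates minimal agreement and monotonicity: for
C1 = ((0,6),(6,0)) (zero-diagonal) and C2 = ((1,5),(5,1)) (obtained from C1 by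
moving mass to the diagonal, so having strictly more correct classifications),
CE(C1) = 1 < CE(C2). -/
theorem ce_violates_minimal_agreement_and_monotonicity :
    CEbin 0 6 6 0 = 1 ∧ 1 < CEbin 1 5 5 1 := by
  have h1 := logb_half
  have h2 := logb_key
  constructor
  · simp only [CEbin, ceTerm]
    norm_num at h1 ⊢
    linarith
  · simp only [CEbin, ceTerm]
    norm_num at h2 ⊢
    linarith
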